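/- Let A be a finite set of non-negative integers with 0 ∈ A, gcd(A) = 1, and b := max A (so b ≥ 1). Let 0 ≤ a < b and suppose (g,k) is the virtual generator of S_a. Then every element (n,h) of ((g,k) + Λ⁺) \ S_a satisfies h ≤ 2b − 5 (as an inequality of integers; in particular this set is empty when b ≤ 2). -/

import Mathlib

open Pointwise

/-- The `h`-fold sumset `hA` of a finite set of naturals:
`0A = {0}` and `(n+1)A = A + nA`. -/
def iterFin (A : Finset ℕ) : ℕ → Finset ℕ
  | 0 => {0}
  | n + 1 => A + iterFin A n

/-- The cone over `A`: pairs `(n, h)` with `n ∈ hA`. -/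
def coneNat (A : Finset ℕ) : Set (ℕ × ℕ) := {p | p.1 ∈ iterFin A p.2}

/-- `Λ⁺ = {(bn, m+n) : m, n ∈ ℕ}`. -/
def lambdaPlus (b : ℕ) : Set (ℕ × ℕ) := {q | ∃ m n : ℕ, q = (b * n, m + n)}

/-- The residue class `S_a`: elements of the cone whose first coordinate is `≡ a (mod b)`. -/
def resClass (A : Finset ℕ) (b a : ℕ) : Set (ℕ × ℕ) := {p ∈ coneNat A | p.1 % b = a}

/-! An extraneous point `(N, H)` lies strictly below the least height `R` with `N ∈ R A`, which
is finite because the column above the point eventually enters `S_a`. The diagonal through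
`(N, R - 1)` also eventually enters `S_a`, so `N ≤ (R - 1) b`. Under the reflection `x ↦ b - x`
of `A`, the number `M = (R - 1) b - N` then has height at least `R` while `M + b` has height at
most `R`. By pigeonhole on prefix sums, a shortest representation has fewer than `b` parts
below `b`; applied to `M + b` and to `M` this gives `R ≤ 2b - 4`. -/

section Sumset

variable {B : Finset ℕ} {b : ℕ}

theorem mem_iterFin_iff {h N : ℕ} :
    N ∈ iterFin B h ↔ ∃ l : List ℕ, l.length = h ∧ (∀ x ∈ l, x ∈ B) ∧ l.sum = N := by
  induction h generalizing N with
  | zero => simp [iterFin, eq_comm]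
  | succ h ih =>
    simp only [iterFin, Finset.mem_add, ih]
    constructor
    · rintro ⟨x, hx, _, ⟨l, rfl, hl, rfl⟩, rfl⟩
      exact ⟨x :: l, rfl, by simpa [hx] using hl, rfl⟩
    · rintro ⟨_ | ⟨x, l⟩, hlen, hl, rfl⟩
      · simp at hlen
      · simp only [List.mem_cons, forall_eq_or_imp] at hl
        exact ⟨x, hl.1, l.sum, ⟨l, by simpa using hlen, hl.2, rfl⟩, rfl⟩

theorem iterFin_mono (h0 : 0 ∈ B) : Monotone (iterFin B) :=
  monotone_nat_of_le_succ fun _ N hN => Finset.mem_add.2 ⟨0, h0, N, hN, zero_add N⟩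

theorem le_mul_of_mem_iterFin (hB : ∀ x ∈ B, x ≤ b) :
    ∀ {h N : ℕ}, N ∈ iterFin B h → N ≤ h * b
  | 0, N, hN => by simp_all [iterFin]
  | h + 1, _, hN => by
    obtain ⟨x, hx, y, hy, rfl⟩ := Finset.mem_add.1 hN
    have := le_mul_of_mem_iterFin hB hy
    have := hB x hx
    rw [add_one_mul]
    omega

theorem tsub_mem_iterFin_image (hB : ∀ x ∈ B, x ≤ b) :
    ∀ {h N : ℕ}, N ∈ iterFin B h → h * b - N ∈ iterFin (B.image (b - ·)) h
  | 0, N, hN => by simp_all [iterFin]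
  | h + 1, _, hN => by
    obtain ⟨x, hx, y, hy, rfl⟩ := Finset.mem_add.1 hN
    have hyb := le_mul_of_mem_iterFin hB hy
    have hxb := hB x hx
    refine Finset.mem_add.2 ⟨b - x, Finset.mem_image_of_mem _ hx, h * b - y,
      tsub_mem_iterFin_image hB hy, ?_⟩
    rw [add_one_mul]
    omega

theorem image_tsub_image_tsub (hB : ∀ x ∈ B, x ≤ b) :
    (B.image (b - ·)).image (b - ·) = B := by
  rw [Finset.image_image]
  exact (Finset.image_congr fun x hx => Nat.sub_sub_self (hB x hx)).trans Finset.image_id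

theorem mem_iterFin_of_tsub_mem_image (hB : ∀ x ∈ B, x ≤ b) {h N : ℕ} (hN : N ≤ h * b)
    (hmem : h * b - N ∈ iterFin (B.image (b - ·)) h) : N ∈ iterFin B h := by
  have hB' : ∀ x ∈ B.image (b - ·), x ≤ b := by simp
  simpa [Nat.sub_sub_self hN, image_tsub_image_tsub hB] using tsub_mem_iterFin_image hB' hmem

theorem exists_isLeast_height {N : ℕ} (h : ∃ s, N ∈ iterFin B s) :
    ∃ r, IsLeast {s | N ∈ iterFin B s} r :=
  ⟨sInf {s | N ∈ iterFin B s}, Nat.sInf_mem h, fun _ hs => Nat.sInf_le hs⟩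

end Sumset

section Lists

variable {b : ℕ}

theorem List.sum_add_length_le_length_mul {l : List ℕ} (hl : ∀ x ∈ l, x < b) :
    l.sum + l.length ≤ l.length * b := by
  induction l with
  | nil => simp
  | cons x l ih =>
    simp only [List.mem_cons, forall_eq_or_imp] at hl
    have := ih hl.2
    simp only [List.sum_cons, List.length_cons, add_one_mul]
    omega

theorem List.exists_eq_append_append_sum_dvd (hb : 0 < b) {l : List ℕ} (hl : b ≤ l.length) :
    ∃ l₁ l₂ l₃ : List ℕ, l = l₁ ++ l₂ ++ l₃ ∧ l₂ ≠ [] ∧ b ∣ l₂.sum := by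
  have hmaps : Set.MapsTo (fun i => (l.take i).sum % b) (Finset.range (b + 1)) (Finset.range b) :=
    fun i _ => Finset.mem_coe.2 (Finset.mem_range.2 (Nat.mod_lt _ hb))
  obtain ⟨i, hi, j, hj, hij, heq⟩ :=
    Finset.exists_ne_map_eq_of_card_lt_of_maps_to (by simp) hmaps
  wlog hlt : i < j generalizing i j
  · exact this j hj i hi hij.symm heq.symm (by omega)
  have hjb : j ≤ b := Nat.lt_succ_iff.1 (Finset.mem_range.1 hj)
  have htake : l.take j = l.take i ++ (l.drop i).take (j - i) := by
    rw [← List.take_add, Nat.add_sub_cancel' hlt.le]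
  refine ⟨l.take i, (l.drop i).take (j - i), l.drop j, ?_, ?_, ?_⟩
  · rw [← htake, List.take_append_drop]
  · simp only [ne_eq, List.take_eq_nil_iff, List.drop_eq_nil_iff]
    omega
  · have hsum : (l.take j).sum = (l.take i).sum + ((l.drop i).take (j - i)).sum := by
      rw [htake, List.sum_append]
    have := (Nat.modEq_iff_dvd' (hsum ▸ Nat.le_add_right _ _)).1 heq
    rwa [hsum, Nat.add_sub_cancel_left] at this

/-- A block of parts below `b` with sum `t * b` is replaced by `t` copies of `b`; the bound
`sum + length ≤ length * b` forces `t` to be smaller than the block. -/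
theorem List.exists_shorter_sum_eq (hb : 0 < b) {l : List ℕ} (hlt : ∀ x ∈ l, x < b)
    (hl : b ≤ l.length) :
    ∃ l' : List ℕ, l'.length < l.length ∧ l'.sum = l.sum ∧ ∀ x ∈ l', x ∈ l ∨ x = b := by
  obtain ⟨l₁, l₂, l₃, rfl, hne, t, ht⟩ := List.exists_eq_append_append_sum_dvd hb hl
  have hbound := List.sum_add_length_le_length_mul (l := l₂) fun x hx => hlt x (by simp [hx])
  have hpos := List.length_pos_iff.2 hne
  have htl : t < l₂.length :=
    Nat.lt_of_mul_lt_mul_left (a := b) (by rw [mul_comm b l₂.length]; omega)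
  refine ⟨l₁ ++ List.replicate t b ++ l₃, ?_, ?_, ?_⟩
  · simp only [List.length_append, List.length_replicate]
    omega
  · simp [List.sum_append, List.sum_replicate, ht, mul_comm]
  · intro x hx
    simp only [List.mem_append, List.mem_replicate] at hx ⊢
    tauto

end Lists

section Height

variable {B : Finset ℕ} {b : ℕ}

theorem length_filter_lt_lt (hb : 0 < b) (hbB : b ∈ B) {l : List ℕ} (hlB : ∀ x ∈ l, x ∈ B)
    (hmin : l.length ∈ lowerBounds {s | l.sum ∈ iterFin B s}) :
    (l.filter (· < b)).length < b := by
  by_contra! hle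
  have hperm := List.filter_append_perm (· < b) l
  obtain ⟨l', hlen, hsum, hmem⟩ := List.exists_shorter_sum_eq hb (l := l.filter (· < b))
    (fun x hx => by simpa using List.of_mem_filter hx) hle
  have hrep : l.sum ∈ iterFin B (l' ++ l.filter (fun x => !decide (x < b))).length := by
    refine mem_iterFin_iff.2 ⟨_, rfl, fun x hx => ?_, ?_⟩
    · rcases List.mem_append.1 hx with hx | hx
      · rcases hmem x hx with hx | rfl
        · exact hlB x (List.mem_of_mem_filter hx)
        · exact hbB
      · exact hlB x (List.mem_of_mem_filter hx)
    · rw [List.sum_append, hsum, ← List.sum_append, hperm.sum_eq]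
  have := hmin hrep
  rw [List.length_append, ← hperm.length_eq, List.length_append] at this
  omega

theorem forall_mem_lt_of_height_add_le (hb : 0 < b) (hbB : b ∈ B) (hB : ∀ x ∈ B, x ≤ b)
    {M r r' : ℕ} (hr : IsLeast {s | M ∈ iterFin B s} r)
    (hr' : IsLeast {s | M + b ∈ iterFin B s} r') (hrr : r' ≤ r) {l : List ℕ}
    (hlB : ∀ x ∈ l, x ∈ B) (hlen : l.length = r') (hsum : l.sum = M + b) :
    ∀ x ∈ l, x < b := by
  intro x hx
  refine lt_of_le_of_ne (hB x (hlB x hx)) ?_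
  rintro rfl
  have hM : M ∈ iterFin B (r' - 1) := mem_iterFin_iff.2 ⟨l.erase x,
    by rw [List.length_erase_of_mem hx, hlen], fun y hy => hlB y (List.mem_of_mem_erase hy),
    by have := List.sum_erase hx; omega⟩
  have := hr.2 hM
  have := List.length_pos_of_mem hx
  omega

/-- If adding `b` does not raise the least height `r` of `M`, a shortest representation
of `M + b` has fewer than `b` parts, all below `b`, so `M + b ≤ (b - 1)²`; this leaves room for
at most `b - 3` parts equal to `b` in a shortest representation of `M`. -/
theorem add_four_le_two_mul_of_height_add_le (hb : 0 < b) (hbB : b ∈ B) (hB : ∀ x ∈ B, x ≤ b)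
    {M r r' : ℕ} (hr : IsLeast {s | M ∈ iterFin B s} r)
    (hr' : IsLeast {s | M + b ∈ iterFin B s} r') (hrr : r' ≤ r) : r + 4 ≤ 2 * b := by
  obtain ⟨l', hl'len, hl'B, hl'sum⟩ := mem_iterFin_iff.1 hr'.1
  have hl'lt := forall_mem_lt_of_height_add_le hb hbB hB hr hr' hrr hl'B hl'len hl'sum
  have hr'b : r' < b := by
    have := length_filter_lt_lt hb hbB hl'B (by rw [hl'len, hl'sum]; exact hr'.2)
    rwa [List.filter_eq_self.2 (by simpa using hl'lt), hl'len] at this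
  have hl'bound := List.sum_add_length_le_length_mul hl'lt
  rw [hl'sum, hl'len] at hl'bound
  obtain ⟨l, rfl, hlB, rfl⟩ := mem_iterFin_iff.1 hr.1
  have hsmall := length_filter_lt_lt hb hbB hlB hr.2
  have hperm := List.filter_append_perm (· < b) l
  have hbig : (l.filter (fun x => !decide (x < b))).length * b ≤ l.sum := by
    rw [← hperm.sum_eq, List.sum_append, ← smul_eq_mul]
    refine le_add_left (List.card_nsmul_le_sum _ _ fun x hx => ?_)
    simpa using List.of_mem_filter hx
  have hlen := hperm.length_eq
  rw [List.length_append] at hlen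
  have : (l.filter (fun x => !decide (x < b))).length + 3 ≤ b := by nlinarith
  omega

end Height

section VirtualGenerator

variable {b g k : ℕ} {S : Set (ℕ × ℕ)}

theorem mem_image_add_lambdaPlus (m n : ℕ) :
    (g + b * n, k + (m + n)) ∈ (fun r => (g, k) + r) '' lambdaPlus b :=
  ⟨(b * n, m + n), ⟨m, n, rfl⟩, rfl⟩

theorem exists_mem_of_finite_diff {α : Type*} {T S : Set α} (hfin : (T \ S).Finite)
    {f : ℕ → α} (hf : Function.Injective f) (hT : ∀ i, f i ∈ T) : ∃ i, f i ∈ S := by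
  by_contra! h
  exact hfin.not_infinite (Set.infinite_of_injective_forall_mem hf fun i => ⟨hT i, h i⟩)

theorem exists_mem_column (hfin : (((fun r => (g, k) + r) '' lambdaPlus b) \ S).Finite)
    (m n : ℕ) : ∃ i, (g + b * n, k + (m + i + n)) ∈ S :=
  exists_mem_of_finite_diff hfin (fun i j h => by simpa using congrArg Prod.snd h)
    fun i => mem_image_add_lambdaPlus (m + i) n

theorem exists_mem_diagonal
    (hfin : (((fun r => (g, k) + r) '' lambdaPlus b) \ S).Finite) (m n : ℕ) : ∃ i, (g + b * (n + i), k + (m + (n + i))) ∈ S :=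
  exists_mem_of_finite_diff hfin (fun i j h => by simpa using congrArg Prod.snd h)
    fun i => mem_image_add_lambdaPlus m (n + i)

end VirtualGenerator

theorem add_four_le_two_mul_of_isLeast_height {A : Finset ℕ} {b : ℕ} (h0 : 0 ∈ A)
    (hb : IsGreatest (A : Set ℕ) b) (hb0 : 0 < b) {N R s : ℕ}
    (hR : IsLeast {h | N ∈ iterFin A h} R) (hR0 : 0 < R)
    (hs : N + b * s ∈ iterFin A (R - 1 + s)) : R + 4 ≤ 2 * b := by
  have hA : ∀ x ∈ A, x ≤ b := fun x hx => hb.2 hx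
  have hB : ∀ x ∈ A.image (b - ·), x ≤ b := by simp
  have h0B : 0 ∈ A.image (b - ·) := Finset.mem_image.2 ⟨b, hb.1, Nat.sub_self b⟩
  have hbB : b ∈ A.image (b - ·) := Finset.mem_image.2 ⟨0, h0, Nat.sub_zero b⟩
  have hNR : N ≤ (R - 1) * b := by
    have := le_mul_of_mem_iterFin hA hs
    rw [add_mul, mul_comm s b] at this
    omega
  have hM : (R - 1) * b - N ∈ iterFin (A.image (b - ·)) (R - 1 + s) := by
    convert tsub_mem_iterFin_image hA hs using 1
    rw [add_mul, mul_comm s b]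
    omega
  have hMb : (R - 1) * b - N + b ∈ iterFin (A.image (b - ·)) R := by
    convert tsub_mem_iterFin_image hA hR.1 using 1
    rw [show R * b = (R - 1) * b + b by rw [← add_one_mul, Nat.sub_one_add_one hR0.ne']]
    omega
  obtain ⟨r, hr⟩ := exists_isLeast_height ⟨_, hM⟩
  obtain ⟨r', hr'⟩ := exists_isLeast_height ⟨_, hMb⟩
  have hRr : R ≤ r := by
    by_contra! hrR
    have hM' := iterFin_mono h0B (Nat.le_sub_one_of_lt hrR) hr.1
    have := hR.2 (mem_iterFin_of_tsub_mem_image hA hNR hM')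
    omega
  have := add_four_le_two_mul_of_height_add_le hb0 hbB hB hr hr' ((hr'.2 hMb).trans hRr)
  omega

theorem extraneous_set_height_bound_general (A : Finset ℕ) (h0 : 0 ∈ A)
    (b : ℕ) (hb : IsGreatest (A : Set ℕ) b) (hb1 : 1 ≤ b)
    (a : ℕ) (g k : ℕ)
    (hvg : resClass A b a ⊆ (fun r => (g, k) + r) '' lambdaPlus b ∧
      (((fun r => (g, k) + r) '' lambdaPlus b) \ resClass A b a).Finite) :
    ∀ p ∈ ((fun r => (g, k) + r) '' lambdaPlus b) \ resClass A b a,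
      (p.2 : ℤ) ≤ 2 * (b : ℤ) - 5 := by
  rintro _ ⟨⟨_, ⟨m, n, rfl⟩, rfl⟩, hp⟩
  obtain ⟨i, hNi, hNa⟩ := exists_mem_column hvg.2 m n
  obtain ⟨R, hR⟩ := exists_isLeast_height ⟨_, hNi⟩
  have hHR : k + (m + n) < R := lt_of_not_ge fun h => hp ⟨iterFin_mono h0 h hR.1, hNa⟩
  obtain ⟨s, hs, -⟩ := exists_mem_diagonal hvg.2 (R - 1 - k - n) n
  rw [show k + (R - 1 - k - n + (n + s)) = R - 1 + s by omega, mul_add, ← add_assoc] at hs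
  have := add_four_le_two_mul_of_isLeast_height h0 hb hb1 hR (by omega) hs
  show ((k + (m + n) : ℕ) : ℤ) ≤ 2 * (b : ℤ) - 5
  omega

theorem extraneous_set_height_bound (A : Finset ℕ) (h0 : 0 ∈ A)
    (hgcd : A.gcd id = 1) (b : ℕ) (hb : IsGreatest (A : Set ℕ) b) (hb1 : 1 ≤ b)
    (a : ℕ) (ha : a < b) (g k : ℕ)
    (hvg : resClass A b a ⊆ (fun r => (g, k) + r) '' lambdaPlus b ∧
      (((fun r => (g, k) + r) '' lambdaPlus b) \ resClass A b a).Finite) :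
    ∀ p ∈ ((fun r => (g, k) + r) '' lambdaPlus b) \ resClass A b a,
      (p.2 : ℤ) ≤ 2 * (b : ℤ) - 5 :=
  extraneous_set_height_bound_general A h0 b hb hb1 a g k hvg
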